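/- For all real R ≥ 4, one has R·(1 − (R−1)·log(R−1)) < 0; consequently the function Q₃(R) = log(R−1)·ψ(exp(μ(R−1) − μ(R))) is decreasing on [4, ∞), where ψ(t) = t/√(1−t²) and μ(x) = x²/2 − log(x). -/

import Mathlib

/-!
Since `R - 1 ≥ 3 > e`, we have `log (R - 1) > 1`, which gives the first claim. For the second,
`t = exp (μ(R-1) - μ(R))` lies in `(0, 1)` because `μ` is increasing on `[1, ∞)`, and with
`L = log (R - 1)` the derivative of `Q₃` has the sign of `(1 - t²) R - L (R² - R + 1)`. This is less
than `R - L (R² - R) = R (1 - (R - 1) L)`, which is negative by the first claim.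
-/

open Real Set

/-- μ(x) = x²/2 − log x. -/
noncomputable def mu (x : ℝ) : ℝ := x ^ 2 / 2 - Real.log x

/-- ψ(t) = t/√(1 − t²). -/
noncomputable def psi (t : ℝ) : ℝ := t / Real.sqrt (1 - t ^ 2)

noncomputable def Q3 (R : ℝ) : ℝ := Real.log (R - 1) * psi (Real.exp (mu (R - 1) - mu R))

lemma one_lt_log_of_three_le {x : ℝ} (hx : 3 ≤ x) : 1 < Real.log x := by
  rw [lt_log_iff_exp_lt (by linarith)]
  exact exp_one_lt_three.trans_le hx

lemma mul_one_sub_mul_log_neg {R : ℝ} (hR : 4 ≤ R) :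
    R * (1 - (R - 1) * Real.log (R - 1)) < 0 := by
  have hL := one_lt_log_of_three_le (show 3 ≤ R - 1 by linarith)
  have : 1 < (R - 1) * Real.log (R - 1) := by nlinarith
  nlinarith

lemma hasDerivAt_mu {x : ℝ} (hx : x ≠ 0) : HasDerivAt mu (x - x⁻¹) x := by
  have hsq : HasDerivAt (fun y : ℝ => y ^ 2 / 2) x x := by
    simpa using (hasDerivAt_pow 2 x).div_const 2
  exact hsq.sub (hasDerivAt_log hx)

lemma mu_strictMonoOn : StrictMonoOn mu (Ici 1) := by
  have hmu : ∀ x ∈ Ici (1 : ℝ), HasDerivAt mu (x - x⁻¹) x :=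
    fun x hx => hasDerivAt_mu (by linarith [mem_Ici.mp hx])
  refine strictMonoOn_of_deriv_pos (convex_Ici 1)
    (fun x hx => (hmu x hx).continuousAt.continuousWithinAt) fun x hx => ?_
  rw [interior_Ici] at hx
  rw [(hmu x (mem_Ici_of_Ioi hx)).deriv]
  exact sub_pos.mpr ((inv_lt_one_of_one_lt₀ hx).trans hx)

lemma exp_mu_sub_mem_Ioo {R : ℝ} (hR : 2 ≤ R) : Real.exp (mu (R - 1) - mu R) ∈ Ioo 0 1 := by
  have hmu : mu (R - 1) < mu R :=
    mu_strictMonoOn (mem_Ici.mpr (by linarith)) (mem_Ici.mpr (by linarith)) (by linarith)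
  exact ⟨exp_pos _, Real.exp_lt_one_iff.mpr (sub_neg.mpr hmu)⟩

lemma hasDerivAt_psi {t : ℝ} (ht : t ^ 2 < 1) :
    HasDerivAt psi (1 / Real.sqrt (1 - t ^ 2) ^ 3) t := by
  have hpos : 0 < 1 - t ^ 2 := by linarith
  have hsqrt : HasDerivAt (fun s => Real.sqrt (1 - s ^ 2))
      (-(2 * t) / (2 * Real.sqrt (1 - t ^ 2))) t := by
    simpa using ((hasDerivAt_pow 2 t).const_sub 1).sqrt hpos.ne'
  refine ((hasDerivAt_id' t).div hsqrt (Real.sqrt_pos.mpr hpos).ne').congr_deriv ?_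
  have ha : Real.sqrt (1 - t ^ 2) ^ 2 = 1 - t ^ 2 := Real.sq_sqrt hpos.le
  field_simp
  rw [ha]
  ring

lemma hasDerivAt_Q3 {R : ℝ} (hR : 2 ≤ R) :
    HasDerivAt Q3 ((R - 1)⁻¹ * psi (Real.exp (mu (R - 1) - mu R)) + Real.log (R - 1) *
      (1 / Real.sqrt (1 - Real.exp (mu (R - 1) - mu R) ^ 2) ^ 3 *
        (Real.exp (mu (R - 1) - mu R) * (R - 1 - (R - 1)⁻¹ - (R - R⁻¹))))) R := by
  have hR1 : R - 1 ≠ 0 := by linarith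
  have hg : HasDerivAt (fun x => mu (x - 1) - mu x) (R - 1 - (R - 1)⁻¹ - (R - R⁻¹)) R :=
    ((hasDerivAt_mu hR1).comp_sub_const R 1).sub (hasDerivAt_mu (by linarith))
  obtain ⟨ht0, ht1⟩ := exp_mu_sub_mem_Ioo hR
  have hpsi : HasDerivAt (fun x => psi (Real.exp (mu (x - 1) - mu x))) _ R :=
    (hasDerivAt_psi (by nlinarith)).comp R hg.exp
  exact ((hasDerivAt_log hR1).comp_sub_const R 1).mul hpsi

lemma deriv_Q3_neg {R : ℝ} (hR : 4 ≤ R) : deriv Q3 R < 0 := by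
  rw [(hasDerivAt_Q3 (by linarith)).deriv]
  obtain ⟨ht0, ht1⟩ := exp_mu_sub_mem_Ioo (by linarith : (2 : ℝ) ≤ R)
  generalize Real.exp (mu (R - 1) - mu R) = t at ht0 ht1 ⊢
  have hpos : 0 < 1 - t ^ 2 := by nlinarith
  have ha : Real.sqrt (1 - t ^ 2) ^ 2 = 1 - t ^ 2 := Real.sq_sqrt hpos.le
  have hapos : 0 < Real.sqrt (1 - t ^ 2) := Real.sqrt_pos.mpr hpos
  have hL := one_lt_log_of_three_le (show 3 ≤ R - 1 by linarith)
  have hsign : (1 - t ^ 2) * R - Real.log (R - 1) * (R ^ 2 - R + 1) < 0 := by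
    nlinarith [mul_one_sub_mul_log_neg hR]
  have hR1 : R - 1 ≠ 0 := by linarith
  have hR0 : R ≠ 0 := by linarith
  calc _ = t / (Real.sqrt (1 - t ^ 2) ^ 3 * (R * (R - 1))) *
        ((1 - t ^ 2) * R - Real.log (R - 1) * (R ^ 2 - R + 1)) := by
        rw [psi]
        field_simp
        rw [ha]
        ring
    _ < 0 := by
        refine mul_neg_of_pos_of_neg (div_pos ht0 ?_) hsign
        exact mul_pos (pow_pos hapos 3) (mul_pos (by linarith) (by linarith))

lemma Q3_strictAntiOn : StrictAntiOn Q3 (Ici 4) := by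
  refine strictAntiOn_of_deriv_neg (convex_Ici 4) (fun R hR => ?_) fun R hR => ?_
  · exact (hasDerivAt_Q3 (by linarith [mem_Ici.mp hR])).continuousAt.continuousWithinAt
  · rw [interior_Ici] at hR
    exact deriv_Q3_neg (le_of_lt hR)

theorem Q3_decreasing :
    (∀ R : ℝ, 4 ≤ R → R * (1 - (R - 1) * Real.log (R - 1)) < 0) ∧
    StrictAntiOn (fun R => Real.log (R - 1) * psi (Real.exp (mu (R - 1) - mu R)))
      (Set.Ici (4 : ℝ)) :=
  ⟨fun _ hR => mul_one_sub_mul_log_neg hR, Q3_strictAntiOn⟩
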